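/- Let X be a discrete random variable with finite support, let Y be the output of an erasure channel applied to X with reveal probability α, and let Ỹ be another random variable such that Y and Ỹ are conditionally independent given X and the erasure event is independent of (X, Ỹ). Then I(X; Y, Ỹ) = α·H(X) + (1 − α)·I(X; Ỹ). -/
import Mathlib


open MeasureTheory BigOperators

/-- Probability of a set as a real number. -/
noncomputable def pr {Ω : Type*} [MeasurableSpace Ω] (μ : Measure Ω) (s : Set Ω) : ℝ :=
  (μ s).toReal

/-- Shannon entropy of a finitely-valued random variable. -/
noncomputable def Hent {Ω α : Type*} [MeasurableSpace Ω] [Fintype α]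
    (μ : Measure Ω) (X : Ω → α) : ℝ :=
  ∑ x : α, Real.negMulLog (pr μ {ω | X ω = x})

/-- Mutual information `I(X;Y) = H(X) + H(Y) − H(X,Y)` of finitely-valued random
variables. -/
noncomputable def MI {Ω α β : Type*} [MeasurableSpace Ω] [Fintype α] [Fintype β]
    (μ : Measure Ω) (X : Ω → α) (Y : Ω → β) : ℝ :=
  Hent μ X + Hent μ Y - Hent μ (fun ω => (X ω, Y ω))

lemma pr_sum_fiber {Ω γ : Type*} [MeasurableSpace Ω] (μ : Measure Ω) [IsProbabilityMeasure μ]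
    [Fintype γ] [MeasurableSpace γ] [MeasurableSingletonClass γ]
    (f : Ω → γ) (hf : Measurable f) (s : Set Ω) (hs : MeasurableSet s) :
    pr μ s = ∑ c : γ, pr μ (s ∩ f ⁻¹' {c}) := by
  have h1 : s = ⋃ c : γ, s ∩ f ⁻¹' {c} := by
    ext ω; simp
  have hd : Pairwise (Function.onFun Disjoint (fun c : γ => s ∩ f ⁻¹' {c})) := by
    intro c d hcd
    simp only [Function.onFun, Set.disjoint_left]
    rintro ω ⟨-, hc⟩ ⟨-, hd2⟩
    exact hcd (hc.symm.trans hd2)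
  have h2 : μ s = ∑ c : γ, μ (s ∩ f ⁻¹' {c}) := by
    conv_lhs => rw [h1]
    rw [measure_iUnion hd (fun c => hs.inter (hf (measurableSet_singleton c))), tsum_fintype]
  rw [pr, h2, ENNReal.toReal_sum (fun c _ => measure_ne_top _ _)]
  rfl

lemma sum_negMulLog_const_mul {ι : Type*} [Fintype ι] (c : ℝ) (g : ι → ℝ) :
    ∑ i : ι, Real.negMulLog (c * g i) =
      Real.negMulLog c * ∑ i, g i + c * ∑ i, Real.negMulLog (g i) := by
  simp only [Real.negMulLog_mul]
  rw [Finset.sum_add_distrib, ← Finset.sum_mul, ← Finset.mul_sum, mul_comm]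

/-- Erasure channel with extra covariate information: if `Y` reveals `X` with probability
`α₀`, the erasure event is independent of `(X, Ỹ)`, and `Y` and `Ỹ` are conditionally
independent given `X`, then `I(X; Y, Ỹ) = α₀·H(X) + (1 − α₀)·I(X; Ỹ)`. -/
theorem erasure_with_side_info {Ω α β : Type*} [MeasurableSpace Ω]
    [Fintype α] [DecidableEq α] [Fintype β] [DecidableEq β]
    [mα : MeasurableSpace α] [MeasurableSingletonClass α]
    [mβ : MeasurableSpace β] [MeasurableSingletonClass β]
    (μ : Measure Ω) [IsProbabilityMeasure μ]
    (X : Ω → α) (E : Ω → Bool) (T : Ω → β)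
    (hmX : Measurable X) (hmE : Measurable E) (hmT : Measurable T)
    (α₀ : ℝ) (hα₀ : 0 ≤ α₀) (hα₁ : α₀ ≤ 1)
    (hα : pr μ {ω | E ω = true} = α₀)
    (hind : ∀ (b : Bool) (x : α) (y : β),
      μ {ω | E ω = b ∧ X ω = x ∧ T ω = y} = μ {ω | E ω = b} * μ {ω | X ω = x ∧ T ω = y})
    (Y : Ω → Option α) (hY : Y = fun ω => if E ω then some (X ω) else none)
    (hcondind : ∀ (x : α) (v : Option α) (y : β),
      μ {ω | X ω = x ∧ Y ω = v ∧ T ω = y} * μ {ω | X ω = x} =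
        μ {ω | X ω = x ∧ Y ω = v} * μ {ω | X ω = x ∧ T ω = y}) :
    MI μ X (fun ω => (Y ω, T ω)) = α₀ * Hent μ X + (1 - α₀) * MI μ X T := by
  classical
  set p : α → β → ℝ := fun x y => pr μ {ω | X ω = x ∧ T ω = y} with hp
  -- measurable sets
  have msX : ∀ x : α, MeasurableSet {ω | X ω = x} := fun x => hmX (measurableSet_singleton x)
  have msT : ∀ y : β, MeasurableSet {ω | T ω = y} := fun y => hmT (measurableSet_singleton y)
  have msE : ∀ b : Bool, MeasurableSet {ω | E ω = b} := fun b => hmE (measurableSet_singleton b)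
  -- probability of no-erasure
  have hEfalse : pr μ {ω | E ω = false} = 1 - α₀ := by
    have hcompl : {ω | E ω = false} = {ω | E ω = true}ᶜ := by
      ext ω; simp
    rw [pr, hcompl, prob_compl_eq_one_sub (msE true),
      ENNReal.toReal_sub_of_le prob_le_one ENNReal.one_ne_top]
    simp [← hα, pr]
  -- independence at the level of real probabilities
  have hmulE : ∀ (b : Bool) (x : α) (y : β),
      pr μ {ω | E ω = b ∧ X ω = x ∧ T ω = y} = pr μ {ω | E ω = b} * p x y := by
    intro b x y
    rw [pr, hind, ENNReal.toReal_mul]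
    rfl
  -- marginals
  have hqy : ∀ y : β, pr μ {ω | T ω = y} = ∑ x, p x y := by
    intro y
    rw [pr_sum_fiber μ X hmX _ (msT y)]
    refine Finset.sum_congr rfl fun x _ => ?_
    congr 1
    ext ω
    simp only [Set.mem_inter_iff, Set.mem_setOf_eq, Set.mem_preimage, Set.mem_singleton_iff]
    exact and_comm
  have hpx : ∀ x : α, pr μ {ω | X ω = x} = ∑ y, p x y := by
    intro x
    rw [pr_sum_fiber μ T hmT _ (msX x)]
    exact Finset.sum_congr rfl fun y _ => rfl
  have hXsum : ∑ x, pr μ {ω | X ω = x} = 1 := by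
    have h := pr_sum_fiber μ X hmX Set.univ MeasurableSet.univ
    have h1 : pr μ Set.univ = 1 := by simp [pr]
    rw [h1] at h
    rw [h]
    refine Finset.sum_congr rfl fun x _ => ?_
    congr 1
    ext ω; simp
  have hTsum : ∑ y, pr μ {ω | T ω = y} = 1 := by
    have h := pr_sum_fiber μ T hmT Set.univ MeasurableSet.univ
    have h1 : pr μ Set.univ = 1 := by simp [pr]
    rw [h1] at h
    rw [h]
    refine Finset.sum_congr rfl fun y _ => ?_
    congr 1
    ext ω; simp
  have hsum1 : ∑ x, ∑ y, p x y = 1 := by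
    rw [← hXsum]
    exact Finset.sum_congr rfl fun x _ => (hpx x).symm
  -- description of Y
  have hYnone : ∀ ω, Y ω = none ↔ E ω = false := by
    intro ω; simp only [hY]; cases h : E ω <;> simp
  have hYsome : ∀ ω a, Y ω = some a ↔ (E ω = true ∧ X ω = a) := by
    intro ω a; simp only [hY]; cases h : E ω <;> simp
  -- sets for the pair (Y,T)
  have sNone : ∀ y : β, {ω | (Y ω, T ω) = ((none : Option α), y)} = {ω | E ω = false ∧ T ω = y} := by
    intro y; ext ω
    simp only [Set.mem_setOf_eq, Prod.mk.injEq, hYnone ω]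
  have sSome : ∀ (a : α) (y : β),
      {ω | (Y ω, T ω) = (some a, y)} = {ω | E ω = true ∧ X ω = a ∧ T ω = y} := by
    intro a y; ext ω
    simp only [Set.mem_setOf_eq, Prod.mk.injEq, hYsome ω a]
    tauto
  -- probability of (E = false, T = y)
  have hEfT : ∀ y : β, pr μ {ω | E ω = false ∧ T ω = y} = (1 - α₀) * pr μ {ω | T ω = y} := by
    intro y
    rw [pr_sum_fiber μ X hmX {ω | E ω = false ∧ T ω = y} ((msE false).inter (msT y)), hqy, Finset.mul_sum]
    refine Finset.sum_congr rfl fun x _ => ?_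
    have h1 : {ω | E ω = false ∧ T ω = y} ∩ X ⁻¹' {x}
        = {ω | E ω = false ∧ X ω = x ∧ T ω = y} := by
      ext ω
      simp only [Set.mem_inter_iff, Set.mem_setOf_eq, Set.mem_preimage, Set.mem_singleton_iff]
      tauto
    rw [h1, hmulE, hEfalse]
  have hEtXT : ∀ (x : α) (y : β),
      pr μ {ω | E ω = true ∧ X ω = x ∧ T ω = y} = α₀ * p x y := by
    intro x y; rw [hmulE, hα]
  -- entropy of (Y,T)
  have HYT : Hent μ (fun ω => (Y ω, T ω)) =
      (∑ y, Real.negMulLog ((1 - α₀) * pr μ {ω | T ω = y}))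
        + ∑ a, ∑ y, Real.negMulLog (α₀ * p a y) := by
    rw [Hent, Fintype.sum_prod_type, Fintype.sum_option]
    congr 1
    · refine Finset.sum_congr rfl fun y _ => ?_
      rw [sNone y, hEfT y]
    · refine Finset.sum_congr rfl fun a _ => Finset.sum_congr rfl fun y _ => ?_
      rw [sSome a y, hEtXT a y]
  -- entropy of (X,(Y,T))
  have HXYT : Hent μ (fun ω => (X ω, (Y ω, T ω))) =
      (∑ x, ∑ y, Real.negMulLog ((1 - α₀) * p x y))
        + ∑ x, ∑ y, Real.negMulLog (α₀ * p x y) := by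
    rw [Hent, Fintype.sum_prod_type]
    rw [← Finset.sum_add_distrib]
    refine Finset.sum_congr rfl fun x _ => ?_
    rw [Fintype.sum_prod_type, Fintype.sum_option]
    congr 1
    · refine Finset.sum_congr rfl fun y _ => ?_
      have h1 : {ω | (X ω, Y ω, T ω) = (x, (none : Option α), y)}
          = {ω | E ω = false ∧ X ω = x ∧ T ω = y} := by
        ext ω
        simp only [Set.mem_setOf_eq, Prod.mk.injEq, hYnone ω]
        tauto
      rw [h1, hmulE, hEfalse]
    · rw [Finset.sum_comm]
      refine Finset.sum_congr rfl fun y _ => ?_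
      rw [Finset.sum_eq_single x]
      · have h1 : {ω | (X ω, Y ω, T ω) = (x, some x, y)}
            = {ω | E ω = true ∧ X ω = x ∧ T ω = y} := by
          ext ω
          simp only [Set.mem_setOf_eq, Prod.mk.injEq, hYsome ω x]
          tauto
        rw [h1, hEtXT]
      · intro a _ hax
        have h1 : {ω | (X ω, Y ω, T ω) = (x, some a, y)} = (∅ : Set Ω) := by
          ext ω
          simp only [Set.mem_setOf_eq, Prod.mk.injEq, hYsome ω a, Set.mem_empty_iff_false,
            iff_false]
          rintro ⟨hx, ⟨-, ha⟩, -⟩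
          exact hax (ha.symm.trans hx)
        rw [h1]
        simp [pr]
      · intro h; exact absurd (Finset.mem_univ x) h
  -- entropy of (X,T)
  have HXT : Hent μ (fun ω => (X ω, T ω)) = ∑ x, ∑ y, Real.negMulLog (p x y) := by
    rw [Hent, Fintype.sum_prod_type]
    refine Finset.sum_congr rfl fun x _ => Finset.sum_congr rfl fun y _ => ?_
    congr 2
    ext ω
    simp only [Set.mem_setOf_eq, Prod.mk.injEq]
  -- scaling identities
  have scaleT : ∑ y, Real.negMulLog ((1 - α₀) * pr μ {ω | T ω = y})
      = Real.negMulLog (1 - α₀) + (1 - α₀) * Hent μ T := by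
    rw [sum_negMulLog_const_mul, hTsum, mul_one, Hent]
  have scaleP : ∑ x, ∑ y, Real.negMulLog ((1 - α₀) * p x y)
      = Real.negMulLog (1 - α₀) + (1 - α₀) * ∑ x, ∑ y, Real.negMulLog (p x y) := by
    simp only [sum_negMulLog_const_mul]
    rw [Finset.sum_add_distrib, ← Finset.mul_sum, ← Finset.mul_sum, hsum1, mul_one]
  -- final computation
  simp only [MI]
  rw [HYT, HXYT, HXT, scaleT, scaleP]
  ring
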